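/- The function h : (x₊, ∞) → ℝ has exactly one zero x_{ph} in (x₊, ∞); moreover h(x) < 0 for x₊ < x < x_{ph} and h(x) > 0 for x > x_{ph}. -/

import Mathlib

open Real Filter Topology Set

noncomputable section

/-- `h(x) = x(x−3) + 2α²(1−β²) + 2αβ√(x − α²(1−β²))`. -/
def hfun (α β x : ℝ) : ℝ :=
  x * (x - 3) + 2 * α ^ 2 * (1 - β ^ 2) + 2 * α * β * Real.sqrt (x - α ^ 2 * (1 - β ^ 2))

/-- `G(x) = x·Δ̄(x) − [h(x) − x(x−1)]²`, with `Δ̄(x) = x² − 2x + α²`. -/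
def Gfun (α β x : ℝ) : ℝ :=
  x * (x ^ 2 - 2 * x + α ^ 2) - (hfun α β x - x * (x - 1)) ^ 2

/-- The effective potential `w_{α,β,λ}(x) = αβλ/x² + √(Δ̄(x)(1 + λ²/x²))`. -/
def wfun (α β lam x : ℝ) : ℝ :=
  α * β * lam / x ^ 2 + Real.sqrt ((x ^ 2 - 2 * x + α ^ 2) * (1 + lam ^ 2 / x ^ 2))

/-- `λ_{sph}(x) = x(√(x − α²(1−β²)) − αβ)/√(h(x))`. -/
def lamsph (α β x : ℝ) : ℝ :=
  x * (Real.sqrt (x - α ^ 2 * (1 - β ^ 2)) - α * β) / Real.sqrt (hfun α β x)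

/-- `ε_{sph}(x) = (x² − 2x + α²(1−β²) + αβ√(x − α²(1−β²)))/(x√(h(x)))`. -/
def epssph (α β x : ℝ) : ℝ :=
  (x ^ 2 - 2 * x + α ^ 2 * (1 - β ^ 2) + α * β * Real.sqrt (x - α ^ 2 * (1 - β ^ 2))) /
    (x * Real.sqrt (hfun α β x))

/-!
`h` is continuous, negative at `x₊` and positive at `4`, and its derivative is positive at every
zero `x > 1`. A continuous function all of whose zeros past `a` are such upward crossings changes
sign exactly once after `a`: between a zero and a later point where it is `≤ 0` there would be a
first point where it is `≤ 0`, which is a zero approached from the positive side.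
-/

section ZerosWithPositiveDerivative

variable {f : ℝ → ℝ}

lemma eventually_pos_nhdsGT_of_deriv_pos {x₀ : ℝ} (hd : 0 < deriv f x₀) (h0 : f x₀ = 0) :
    ∀ᶠ x in 𝓝[>] x₀, 0 < f x := by
  filter_upwards [nhdsWithin_le_nhds (eventually_nhdsWithin_sign_eq_of_deriv_pos hd h0),
    self_mem_nhdsWithin] with x hsign hx
  rw [sign_pos (sub_pos.2 hx)] at hsign
  exact sign_eq_one_iff.mp hsign

lemma eventually_neg_nhdsLT_of_deriv_pos {x₀ : ℝ} (hd : 0 < deriv f x₀) (h0 : f x₀ = 0) :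
    ∀ᶠ x in 𝓝[<] x₀, f x < 0 := by
  filter_upwards [nhdsWithin_le_nhds (eventually_nhdsWithin_sign_eq_of_deriv_pos hd h0),
    self_mem_nhdsWithin] with x hsign hx
  rw [sign_neg (sub_neg.2 hx)] at hsign
  exact sign_eq_neg_one_iff.mp hsign

variable {a : ℝ}

lemma pos_of_zero_lt_of_deriv_pos (hf : Continuous f)
    (hderiv : ∀ x, a < x → f x = 0 → 0 < deriv f x) {x₀ x : ℝ} (hax₀ : a < x₀)
    (h0 : f x₀ = 0) (hx : x₀ < x) : 0 < f x := by
  by_contra! hfx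
  obtain ⟨c, hfc, hc⟩ := ((eventually_pos_nhdsGT_of_deriv_pos (hderiv x₀ hax₀ h0) h0).and
    (Ioo_mem_nhdsGT hx)).exists
  set S := Icc c x ∩ {z | f z ≤ 0}
  have hS : IsClosed S := isClosed_Icc.inter (isClosed_le hf continuous_const)
  have hSbdd : BddBelow S := ⟨c, fun z hz => hz.1.1⟩
  have hm : sInf S ∈ S := hS.csInf_mem ⟨x, ⟨hc.2.le, le_rfl⟩, hfx⟩ hSbdd
  set m := sInf S
  have hcm : c < m := hm.1.1.lt_of_ne fun h => (h ▸ hfc).not_ge hm.2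
  have hpos : ∀ z ∈ Ioo c m, 0 < f z := fun z hz => not_le.mp fun hz' =>
    hz.2.not_ge (csInf_le hSbdd ⟨⟨hz.1.le, hz.2.le.trans hm.1.2⟩, hz'⟩)
  have hm0 : f m = 0 := le_antisymm hm.2 <|
    ge_of_tendsto ((hf.tendsto m).mono_left nhdsWithin_le_nhds)
      (eventually_of_mem (Ioo_mem_nhdsLT hcm) fun z hz => (hpos z hz).le)
  obtain ⟨z, hfz, hz⟩ := ((eventually_neg_nhdsLT_of_deriv_pos
    (hderiv m (hax₀.trans (hc.1.trans hcm)) hm0) hm0).and (Ioo_mem_nhdsLT hcm)).exists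
  exact (hpos z hz).not_gt hfz

lemma exists_sign_change_of_deriv_pos (hf : Continuous f)
    (hderiv : ∀ x, a < x → f x = 0 → 0 < deriv f x) {b : ℝ} (hab : a < b) (ha : f a < 0)
    (hb : 0 < f b) :
    ∃ x₀, a < x₀ ∧ f x₀ = 0 ∧ (∀ x, a < x → x < x₀ → f x < 0) ∧ ∀ x, x₀ < x → 0 < f x := by
  obtain ⟨x₀, hx₀, h0⟩ := intermediate_value_Ioo hab.le hf.continuousOn ⟨ha, hb⟩
  refine ⟨x₀, hx₀.1, h0, fun x hax hxx₀ => not_le.mp fun hfx => ?_,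
    fun x hx => pos_of_zero_lt_of_deriv_pos hf hderiv hx₀.1 h0 hx⟩
  obtain ⟨y, hy, hy0⟩ := intermediate_value_Ioc hax.le hf.continuousOn ⟨ha, hfx⟩
  exact (pos_of_zero_lt_of_deriv_pos hf hderiv hy.1 hy0 (hy.2.trans_lt hxx₀)).ne' h0

end ZerosWithPositiveDerivative

/-- `h` in the parameters `c = α²(1−β²)` and `t = αβ`, so that `α² = c + t²`. -/
def hred (c t x : ℝ) : ℝ :=
  x * (x - 3) + 2 * c + 2 * t * √(x - c)

lemma hfun_eq_hred (α β : ℝ) : hfun α β = hred (α ^ 2 * (1 - β ^ 2)) (α * β) := by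
  funext x
  simp only [hfun, hred]
  ring

section Hred

variable {c t : ℝ}

lemma continuous_hred : Continuous (hred c t) := by
  unfold hred
  fun_prop

lemma hasDerivAt_hred {x : ℝ} (hx : c < x) :
    HasDerivAt (hred c t) (2 * x - 3 + t / √(x - c)) x := by
  have hsqrt : HasDerivAt (fun y => √(y - c)) (1 / (2 * √(x - c))) x :=
    ((hasDerivAt_id x).sub_const c).sqrt (sub_pos.2 hx).ne'
  have hsum := ((((hasDerivAt_id x).mul ((hasDerivAt_id x).sub_const 3)).add_const (2 * c)).add
    (hsqrt.const_mul (2 * t)))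
  refine hsum.congr_deriv ?_
  have : √(x - c) ≠ 0 := (sqrt_pos.2 (sub_pos.2 hx)).ne'
  simp only [id]
  field_simp
  ring

/-- At a zero, `2x − 3 + t/√(x−c) = (x−1)(3x−4c)/(2(x−c))`, and squaring the zero equation
`2t√(x−c) = 3x − x² − 2c` against `t² < 1 − c` forces `3x > 4c`. -/
lemma hred_deriv_pos_of_eq_zero (hct : c + t ^ 2 < 1) {x : ℝ} (hx : 1 < x)
    (h0 : hred c t x = 0) : 0 < 2 * x - 3 + t / √(x - c) := by
  have hxc : 0 < x - c := by nlinarith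
  set u := √(x - c)
  have hu : 0 < u := sqrt_pos.2 hxc
  have hu2 : u ^ 2 = x - c := sq_sqrt hxc.le
  have hzero : 2 * t * u = 3 * x - x ^ 2 - 2 * c := by simp only [hred] at h0; linarith
  have hsq : (3 * x - x ^ 2 - 2 * c) ^ 2 < 4 * (1 - c) * (x - c) := by
    rw [← hzero, mul_pow, mul_pow, hu2]
    nlinarith
  have h3x : 0 < 3 * x - 4 * c := by
    have : (x - 1) ^ 2 * (4 * c - 3 * x) < 0 := by
      nlinarith [pow_pos (sub_pos.2 hx) 3, (by linarith : (0:ℝ) < x)]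
    linarith [neg_of_mul_neg_right this (sq_nonneg _)]
  have hid : 2 * x - 3 + t / u = (x - 1) * (3 * x - 4 * c) / (2 * u ^ 2) := by
    field_simp
    linear_combination hzero + 2 * (2 * x - 3) * hu2
  rw [hid]
  exact div_pos (mul_pos (sub_pos.2 hx) h3x) (by positivity)

lemma deriv_hred_pos_of_eq_zero (hct : c + t ^ 2 < 1) {x : ℝ} (hx : 1 < x)
    (h0 : hred c t x = 0) : 0 < deriv (hred c t) x := by
  rw [(hasDerivAt_hred (by nlinarith)).deriv]
  exact hred_deriv_pos_of_eq_zero hct hx h0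

/-- With `s = √(1 − c − t²)` and `w = √(1 + s − c)` one has `h(1 + s) = −(w − t)²`,
and `w² − t² = s + s² > 0`. -/
lemma hred_one_add_sqrt_neg (hct : c + t ^ 2 < 1) : hred c t (1 + √(1 - (c + t ^ 2))) < 0 := by
  set s := √(1 - (c + t ^ 2))
  have hs : 0 < s := sqrt_pos.2 (by linarith)
  have hs2 : s ^ 2 = 1 - (c + t ^ 2) := sq_sqrt (by linarith)
  have hw2 : √(1 + s - c) ^ 2 = 1 + s - c := sq_sqrt (by nlinarith)
  have hne : √(1 + s - c) - t ≠ 0 := fun h => by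
    rw [show √(1 + s - c) = t by linarith] at hw2
    nlinarith
  have : hred c t (1 + s) = -(√(1 + s - c) - t) ^ 2 := by
    simp only [hred, show 1 + s - 3 = s - 2 by ring]
    linear_combination hs2 + hw2
  rw [this, neg_lt_zero]
  positivity

lemma hred_four_pos (hc : 0 ≤ c) (hct : c + t ^ 2 < 1) : 0 < hred c t 4 := by
  have hS2 : √(4 - c) ^ 2 = 4 - c := sq_sqrt (by nlinarith)
  simp only [hred]
  nlinarith [sq_nonneg (2 * t + √(4 - c))]

theorem hred_unique_zero (hc : 0 ≤ c) (hct : c + t ^ 2 < 1) :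
    ∃ x₀, 1 + √(1 - (c + t ^ 2)) < x₀ ∧ hred c t x₀ = 0 ∧
      (∀ x, 1 + √(1 - (c + t ^ 2)) < x → x < x₀ → hred c t x < 0) ∧
      ∀ x, x₀ < x → 0 < hred c t x := by
  have hs1 : √(1 - (c + t ^ 2)) ≤ 1 := sqrt_le_one.mpr (by nlinarith)
  refine exists_sign_change_of_deriv_pos continuous_hred (fun x hx h0 => ?_)
    (by linarith : 1 + √(1 - (c + t ^ 2)) < 4) (hred_one_add_sqrt_neg hct)
    (hred_four_pos hc hct)
  exact deriv_hred_pos_of_eq_zero hct ((le_add_of_nonneg_right (sqrt_nonneg _)).trans_lt hx) h0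

end Hred

/-- The function `h` has exactly one zero `x_{ph}` in `(x₊, ∞)`; it is
strictly negative on `(x₊, x_{ph})` and strictly positive on `(x_{ph}, ∞)`. -/
theorem hfun_unique_zero (α β : ℝ) (hα0 : 0 ≤ α) (hα1 : α < 1)
    (hβ0 : -1 ≤ β) (hβ1 : β ≤ 1) :
    ∃ xph : ℝ, 1 + Real.sqrt (1 - α ^ 2) < xph ∧ hfun α β xph = 0 ∧
      (∀ x : ℝ, 1 + Real.sqrt (1 - α ^ 2) < x → x < xph → hfun α β x < 0) ∧
      (∀ x : ℝ, xph < x → 0 < hfun α β x) := by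
  have hc : 0 ≤ α ^ 2 * (1 - β ^ 2) := mul_nonneg (sq_nonneg α) (by nlinarith)
  have hsum : α ^ 2 * (1 - β ^ 2) + (α * β) ^ 2 = α ^ 2 := by ring
  have hct : α ^ 2 * (1 - β ^ 2) + (α * β) ^ 2 < 1 := by rw [hsum]; nlinarith
  have := hred_unique_zero hc hct
  rwa [hsum, ← hfun_eq_hred] at this

end
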